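/- Let n ∈ ℕ and A, B : ℤ → Matrix (Fin n) (Fin n) ℂ be banded, i.e. A_k = 0 for |k| > d_A and B_k = 0 for |k| > d_B, and define C_k = ∑_{j∈ℤ} A_{k−j} B_j (a finite sum). Let m ∈ ℕ and let η ∈ ℕ satisfy 2η ≥ min(d_A, d_B). Then the block-matrix identity T_m(A)·T_m(B) = T_m(C) − E⁺ − E⁻ holds, where T_m(·) is the m-truncated block Toeplitz matrix, E⁺ is the matrix with block entries E⁺_{ij} = ∑_{k=m+1}^{m+2η+1} A_{i−k} B_{k−j}, and E⁻ is the matrix with block entries E⁻_{ij} = ∑_{k=−m−2η−1}^{−m−1} A_{i−k} B_{k−j}, for i, j ∈ {−m, …, m}. (Theorem 1 of the paper: the truncated Toeplitz block product formula with finite Hankel-product correction terms.) -/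

import Mathlib

/-!
The `(i, j)` block of `T_m(A) T_m(B)` is `∑_{|k| ≤ m} A_{i-k} B_{k-j}`, while the `(i, j)` block
of `T_m(C)` is the full convolution `∑_{k ∈ ℤ} A_{i-k} B_{k-j}`. A term of the latter is nonzero
only if `|i - k| ≤ d_A` and `|k - j| ≤ d_B`, so one of these distances is at most
`min d_A d_B ≤ 2η`; for `|i|, |j| ≤ m` this confines `k` to the window `[-m-2η-1, m+2η+1]`, and
the parts of this window outside `[-m, m]` are exactly the two correction sums.
-/

open Finset

lemma Int.sum_Icc_consecutive {M : Type*} [AddCommMonoid M] (f : ℤ → M) {a b c : ℤ}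
    (hab : a ≤ b + 1) (hbc : b ≤ c) :
    ∑ k ∈ Icc a c, f k = ∑ k ∈ Icc a b, f k + ∑ k ∈ Icc (b + 1) c, f k := by
  rw [← sum_union (disjoint_left.2 fun k h₁ h₂ => by simp only [mem_Icc] at h₁ h₂; omega)]
  congr 1
  ext k
  simp only [mem_Icc, mem_union]
  omega

lemma blockToeplitz_mul_blockToeplitz {G ι R : Type*} [Fintype ι] [AddGroup G]
    [NonUnitalNonAssocSemiring R] (s : Finset G) (A B : G → Matrix ι ι R) :
    (Matrix.of fun i j : s × ι => A (i.1.1 - j.1.1) i.2 j.2) *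
        (Matrix.of fun i j : s × ι => B (i.1.1 - j.1.1) i.2 j.2) =
      Matrix.of fun i j : s × ι => (∑ k ∈ s, A (i.1.1 - k) * B (k - j.1.1)) i.2 j.2 := by
  ext ⟨i, a⟩ ⟨j, b⟩
  simp only [Matrix.mul_apply, Matrix.of_apply, Fintype.sum_prod_type, Matrix.sum_apply]
  exact sum_coe_sort s fun k => ∑ c, A (i.1 - k) a c * B (k - j.1) c b

lemma tsum_convolution_eq_sum {G R : Type*} [AddCommGroup G] [NonUnitalNonAssocSemiring R]
    [TopologicalSpace R] (A B : G → R) (x y : G) (t : Finset G)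
    (hvanish : ∀ k ∉ t, A (x - k) * B (k - y) = 0) :
    ∑' j : G, A (x - y - j) * B j = ∑ k ∈ t, A (x - k) * B (k - y) := by
  rw [← (Equiv.subRight y).tsum_eq]
  simp only [Equiv.subRight_apply, sub_sub, add_sub_cancel]
  exact tsum_eq_sum hvanish

lemma mul_eq_zero_of_banded {R : Type*} [MulZeroClass R] {A B : ℤ → R} {dA dB : ℕ}
    (hA : ∀ k : ℤ, (dA : ℤ) < |k| → A k = 0) (hB : ∀ k : ℤ, (dB : ℤ) < |k| → B k = 0)
    {x y : ℤ} (hx : ((min dA dB : ℕ) : ℤ) < |x|) (hy : ((min dA dB : ℕ) : ℤ) < |y|) :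
    A x * B y = 0 := by
  rcases le_total dA dB with h | h
  · rw [hA x (by simpa [h] using hx), zero_mul]
  · rw [hB y (by simpa [h] using hy), mul_zero]

/-- Theorem 1 of the paper (truncated Toeplitz block product formula): for banded
matrix symbols `A` (degree `dA`) and `B` (degree `dB`) with convolution `C`, and any
truncation order `m` and any `η` with `2η ≥ min(dA, dB)`, the product of the
`m`-truncated block Toeplitz matrices equals the `m`-truncation of the Toeplitz block
matrix of `C` minus the two (finite) Hankel-product correction terms `E⁺` and `E⁻`. -/
theorem truncated_toeplitz_block_product
    (n : ℕ) (A B : ℤ → Matrix (Fin n) (Fin n) ℂ) (dA dB : ℕ)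
    (hA : ∀ k : ℤ, (dA : ℤ) < |k| → A k = 0)
    (hB : ∀ k : ℤ, (dB : ℤ) < |k| → B k = 0)
    (C : ℤ → Matrix (Fin n) (Fin n) ℂ)
    (hC : ∀ k : ℤ, C k = ∑' j : ℤ, A (k - j) * B j)
    (m η : ℕ) (hη : 2 * η ≥ min dA dB) :
    (Matrix.of fun i j : {k : ℤ // k ∈ Finset.Icc (-(m : ℤ)) (m : ℤ)} × Fin n =>
        A ((i.1 : ℤ) - (j.1 : ℤ)) i.2 j.2) *
      (Matrix.of fun i j : {k : ℤ // k ∈ Finset.Icc (-(m : ℤ)) (m : ℤ)} × Fin n =>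
        B ((i.1 : ℤ) - (j.1 : ℤ)) i.2 j.2)
    = (Matrix.of fun i j : {k : ℤ // k ∈ Finset.Icc (-(m : ℤ)) (m : ℤ)} × Fin n =>
        C ((i.1 : ℤ) - (j.1 : ℤ)) i.2 j.2)
      - (Matrix.of fun i j : {k : ℤ // k ∈ Finset.Icc (-(m : ℤ)) (m : ℤ)} × Fin n =>
          (∑ k ∈ Finset.Icc ((m : ℤ) + 1) ((m : ℤ) + 2 * (η : ℤ) + 1),
            A ((i.1 : ℤ) - k) * B (k - (j.1 : ℤ))) i.2 j.2)
      - (Matrix.of fun i j : {k : ℤ // k ∈ Finset.Icc (-(m : ℤ)) (m : ℤ)} × Fin n =>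
          (∑ k ∈ Finset.Icc (-(m : ℤ) - 2 * (η : ℤ) - 1) (-(m : ℤ) - 1),
            A ((i.1 : ℤ) - k) * B (k - (j.1 : ℤ))) i.2 j.2) := by
  rw [blockToeplitz_mul_blockToeplitz]
  ext ⟨⟨i, hi⟩, a⟩ ⟨⟨j, hj⟩, b⟩
  rw [mem_Icc] at hi hj
  have hCij : C (i - j) =
      ∑ k ∈ Icc (-(m : ℤ) - 2 * η - 1) (m + 2 * η + 1), A (i - k) * B (k - j) := by
    rw [hC]
    refine tsum_convolution_eq_sum A B i j _ fun k hk => mul_eq_zero_of_banded hA hB ?_ ?_ <;>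
      (rw [mem_Icc] at hk; rw [lt_abs]; omega)
  rw [Int.sum_Icc_consecutive _ (b := -(m : ℤ) - 1) (by omega) (by omega), sub_add_cancel,
    Int.sum_Icc_consecutive _ (a := -(m : ℤ)) (b := m) (by omega) (by omega)] at hCij
  simp only [Matrix.of_apply, Matrix.sub_apply, hCij, Matrix.add_apply]
  abel
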